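/- arXiv:1712.07641 — 2 statements merged into one kernel-verified Lean document; each statement's English description precedes it below -/
import Mathlib

section
/- Suppose a square-integrable random element X in H satisfies Γ₀ X = Z where Γ₀ is a boundedly invertible operator on a finite-dimensional subspace M_d of H, X and Z take values in M_d, and Σ(X), Σ(Z) are invertible on M_d. Then Σ(X)^{-1/2} X = U₀ Σ(Z)^{-1/2} Z, where U₀ = (Σ(Z)^{-1/2} Γ₀ Σ(X)^{1/2})* and Σ(Z)^{-1/2} Γ₀ Σ(X)^{1/2} is unitary on M_d (i.e., A₀A₀* = A₀*A₀ = P_{M_d}). -/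
open scoped RealInnerProductSpace
open MeasureTheory ContinuousLinearMap

/-!
Weak covariances transform as `Σ(Γ₀ X) = Γ₀ Σ(X) Γ₀*`, so with `A₀ = Σ(Z)^{-1/2} Γ₀ Σ(X)^{1/2}` one
gets `A₀ A₀* = Σ(Z)^{-1/2} Σ(Z) Σ(Z)^{-1/2} = P`. Restricted to the finite-dimensional `M_d`, a
right inverse is a left inverse, hence also `A₀* A₀ = P`. Finally `Σ(Z)^{-1/2} Z = A₀ Σ(X)^{-1/2} X`
because `X` lies in `M_d`, and applying `A₀*` gives the whitening identity.
-/

theorem ContinuousLinearMap.comp_eq_of_comp_eq_of_finiteDimensional_range {K V : Type*} [Field K]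
    [TopologicalSpace V] [AddCommGroup V] [Module K V] {P A B : V →L[K] V}
    [FiniteDimensional K P.range]
    (hPA : P ∘L A = A) (hAP : A ∘L P = A) (hPB : P ∘L B = B) (hAB : A ∘L B = P) :
    B ∘L A = P := by
  have hPP : P ∘L P = P :=
    calc P ∘L P = P ∘L (A ∘L B) := by rw [hAB]
      _ = P := by rw [← comp_assoc, hPA, hAB]
  have hP_fix : ∀ x ∈ P.range, P x = x := by
    rintro _ ⟨y, rfl⟩
    exact DFunLike.congr_fun hPP y
  let a : Module.End K P.range :=
    (A : V →ₗ[K] V).restrict fun x _ => ⟨A x, DFunLike.congr_fun hPA x⟩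
  let b : Module.End K P.range :=
    (B : V →ₗ[K] V).restrict fun x _ => ⟨B x, DFunLike.congr_fun hPB x⟩
  have hab : a * b = 1 := by
    ext ⟨x, hx⟩
    exact (DFunLike.congr_fun hAB x).trans (hP_fix x hx)
  have hba : b * a = 1 := mul_eq_one_comm.1 hab
  ext x
  calc B (A x) = B (A (P x)) := by rw [← comp_apply A P, hAP]
    _ = P x := congr_arg Subtype.val (DFunLike.congr_fun hba (⟨P x, x, rfl⟩ : P.range))

section Covariance

variable {Ω E F : Type*} [MeasurableSpace Ω]
  [NormedAddCommGroup E] [InnerProductSpace ℝ E] [NormedAddCommGroup F] [InnerProductSpace ℝ F]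

def IsCovarianceOperator (μ : Measure Ω) (X : Ω → E) (S : E →L[ℝ] E) : Prop :=
  ∀ f g : E, ⟪f, S g⟫ = ∫ ω, ⟪f, X ω⟫ * ⟪X ω, g⟫ ∂μ

variable {μ : Measure Ω} {X : Ω → E} {S T : E →L[ℝ] E}

theorem IsCovarianceOperator.unique (hS : IsCovarianceOperator μ X S)
    (hT : IsCovarianceOperator μ X T) : S = T :=
  ContinuousLinearMap.ext fun g => ext_inner_left ℝ fun f => (hS f g).trans (hT f g).symm

theorem IsCovarianceOperator.map [CompleteSpace E] [CompleteSpace F]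
    (hS : IsCovarianceOperator μ X S) (Γ : E →L[ℝ] F) :
    IsCovarianceOperator μ (fun ω => Γ (X ω)) (Γ ∘L S ∘L adjoint Γ) := by
  intro f g
  rw [comp_apply, comp_apply, ← adjoint_inner_left, hS]
  simp only [adjoint_inner_left, adjoint_inner_right]

end Covariance

theorem stmt_11_general {H : Type*}
    [NormedAddCommGroup H] [InnerProductSpace ℝ H] [CompleteSpace H]
    {Ω : Type*} [MeasurableSpace Ω]
    (μ : Measure Ω)
    (M : Submodule ℝ H) [FiniteDimensional ℝ M]
    (P : H →L[ℝ] H)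
    (hP : P = M.subtypeL.comp M.orthogonalProjectionOnto)
    (X Z : Ω → H)
    (hXM : ∀ ω, X ω ∈ M)
    (Γ₀ : H →L[ℝ] H)
    (hZ : ∀ ω, Z ω = Γ₀ (X ω))
    -- the covariance operators of `X` and `Z`, defined weakly
    (SX SZ : H →L[ℝ] H)
    (hSX : ∀ f g : H, ⟪f, SX g⟫ = ∫ ω, ⟪f, X ω⟫ * ⟪X ω, g⟫ ∂μ)
    (hSZ : ∀ f g : H, ⟪f, SZ g⟫ = ∫ ω, ⟪f, Z ω⟫ * ⟪Z ω, g⟫ ∂μ)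
    -- the self-adjoint square root of `Σ(X)` within `M_d`
    (SXhalf : H →L[ℝ] H) (hSXhalf_sa : IsSelfAdjoint SXhalf)
    (hSXhalfP : SXhalf.comp P = SXhalf ∧ P.comp SXhalf = SXhalf)
    (hSXhalf : SXhalf.comp SXhalf = SX)
    -- the self-adjoint inverse square root of `Σ(X)` within `M_d`
    (SXinvhalf : H →L[ℝ] H)
    (hSXinvhalfP : SXinvhalf.comp P = SXinvhalf ∧ P.comp SXinvhalf = SXinvhalf)
    (hSXhalfinv : SXinvhalf.comp SXhalf = P ∧ SXhalf.comp SXinvhalf = P)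
    -- the self-adjoint inverse square root of `Σ(Z)` within `M_d`
    (SZinvhalf : H →L[ℝ] H) (hSZinvhalf_sa : IsSelfAdjoint SZinvhalf)
    (hSZinvhalfP : SZinvhalf.comp P = SZinvhalf ∧ P.comp SZinvhalf = SZinvhalf)
    (hSZinvhalf : SZinvhalf.comp (SZ.comp SZinvhalf) = P) :
    (SZinvhalf.comp (Γ₀.comp SXhalf)).comp
        (ContinuousLinearMap.adjoint (SZinvhalf.comp (Γ₀.comp SXhalf))) = P ∧
      (ContinuousLinearMap.adjoint (SZinvhalf.comp (Γ₀.comp SXhalf))).comp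
        (SZinvhalf.comp (Γ₀.comp SXhalf)) = P ∧
      ∀ ω, SXinvhalf (X ω)
        = (ContinuousLinearMap.adjoint (SZinvhalf.comp (Γ₀.comp SXhalf)))
            (SZinvhalf (Z ω)) := by
  obtain rfl : P = M.starProjection := hP
  obtain rfl : Z = fun ω => Γ₀ (X ω) := funext hZ
  set A := SZinvhalf ∘L Γ₀ ∘L SXhalf with hA
  have hSZ_eq : SZ = Γ₀ ∘L SX ∘L adjoint Γ₀ :=
    IsCovarianceOperator.unique hSZ (IsCovarianceOperator.map hSX Γ₀)
  have hA_adj : adjoint A = SXhalf ∘L adjoint Γ₀ ∘L SZinvhalf := by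
    rw [hA, adjoint_comp, adjoint_comp, hSXhalf_sa.adjoint_eq, hSZinvhalf_sa.adjoint_eq, comp_assoc]
  have hAA : A ∘L adjoint A = M.starProjection := by
    rw [hA_adj, ← hSZinvhalf, hSZ_eq, ← hSXhalf]
    simp only [A, comp_assoc]
  have hAadA : adjoint A ∘L A = M.starProjection := by
    have : FiniteDimensional ℝ M.starProjection.range := by
      rwa [Submodule.range_starProjection]
    refine comp_eq_of_comp_eq_of_finiteDimensional_range ?_ ?_ ?_ hAA
    · simp only [A, ← comp_assoc, hSZinvhalfP.2]
    · simp only [A, comp_assoc, hSXhalfP.1]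
    · rw [hA_adj, ← comp_assoc, hSXhalfP.2]
  refine ⟨hAA, hAadA, fun ω => ?_⟩
  have hX : SXhalf (SXinvhalf (X ω)) = X ω := by
    rw [← comp_apply, hSXhalfinv.2]
    exact Submodule.starProjection_eq_self_iff.2 (hXM ω)
  calc SXinvhalf (X ω) = M.starProjection (SXinvhalf (X ω)) := by
        rw [← comp_apply, hSXinvhalfP.2]
    _ = adjoint A (A (SXinvhalf (X ω))) := by rw [← hAadA]; rfl
    _ = adjoint A (SZinvhalf (Γ₀ (X ω))) := by simp only [A, comp_apply, hX]

/-- If `Γ₀ X = Z` with `Γ₀` boundedly invertible on the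
finite-dimensional subspace `M_d` (with orthogonal projection `P`), `X, Z`
take values in `M_d`, and the covariance operators admit self-adjoint inverse
square roots within `M_d`, then `Σ(X)^{-1/2} X = U₀ Σ(Z)^{-1/2} Z` where
`U₀ = A₀*`, and `A₀ = Σ(Z)^{-1/2} Γ₀ Σ(X)^{1/2}` is unitary on `M_d`, i.e.
`A₀ A₀* = A₀* A₀ = P`. -/
theorem stmt_11 {H : Type*}
    [NormedAddCommGroup H] [InnerProductSpace ℝ H] [CompleteSpace H]
    [TopologicalSpace.SeparableSpace H]
    {Ω : Type*} [MeasurableSpace Ω]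
    (μ : Measure Ω) [IsProbabilityMeasure μ]
    (M : Submodule ℝ H) [FiniteDimensional ℝ M]
    (P : H →L[ℝ] H)
    (hP : P = M.subtypeL.comp M.orthogonalProjectionOnto)
    (X Z : Ω → H)
    (hX : MemLp X 2 μ) (hmean : ∫ ω, X ω ∂μ = 0)
    (hXM : ∀ ω, X ω ∈ M)
    (Γ₀ : H →L[ℝ] H) (hΓP : Γ₀.comp P = Γ₀ ∧ P.comp Γ₀ = Γ₀)
    -- `Γ₀` is boundedly invertible on `M_d`
    (Γinv : H →L[ℝ] H) (hΓinvP : Γinv.comp P = Γinv ∧ P.comp Γinv = Γinv)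
    (hΓinv : Γ₀.comp Γinv = P ∧ Γinv.comp Γ₀ = P)
    (hZ : ∀ ω, Z ω = Γ₀ (X ω))
    -- the covariance operators of `X` and `Z`, defined weakly
    (SX SZ : H →L[ℝ] H)
    (hSX : ∀ f g : H, ⟪f, SX g⟫ = ∫ ω, ⟪f, X ω⟫ * ⟪X ω, g⟫ ∂μ)
    (hSZ : ∀ f g : H, ⟪f, SZ g⟫ = ∫ ω, ⟪f, Z ω⟫ * ⟪Z ω, g⟫ ∂μ)
    -- the self-adjoint square root of `Σ(X)` within `M_d`
    (SXhalf : H →L[ℝ] H) (hSXhalf_sa : IsSelfAdjoint SXhalf)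
    (hSXhalfP : SXhalf.comp P = SXhalf ∧ P.comp SXhalf = SXhalf)
    (hSXhalf : SXhalf.comp SXhalf = SX)
    -- the self-adjoint inverse square root of `Σ(X)` within `M_d`
    (SXinvhalf : H →L[ℝ] H) (hSXinvhalf_sa : IsSelfAdjoint SXinvhalf)
    (hSXinvhalfP : SXinvhalf.comp P = SXinvhalf ∧ P.comp SXinvhalf = SXinvhalf)
    (hSXinvhalf : SXinvhalf.comp (SX.comp SXinvhalf) = P)
    (hSXhalfinv : SXinvhalf.comp SXhalf = P ∧ SXhalf.comp SXinvhalf = P)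
    -- the self-adjoint inverse square root of `Σ(Z)` within `M_d`
    (SZinvhalf : H →L[ℝ] H) (hSZinvhalf_sa : IsSelfAdjoint SZinvhalf)
    (hSZinvhalfP : SZinvhalf.comp P = SZinvhalf ∧ P.comp SZinvhalf = SZinvhalf)
    (hSZinvhalf : SZinvhalf.comp (SZ.comp SZinvhalf) = P) :
    (SZinvhalf.comp (Γ₀.comp SXhalf)).comp
        (ContinuousLinearMap.adjoint (SZinvhalf.comp (Γ₀.comp SXhalf))) = P ∧
      (ContinuousLinearMap.adjoint (SZinvhalf.comp (Γ₀.comp SXhalf))).comp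
        (SZinvhalf.comp (Γ₀.comp SXhalf)) = P ∧
      ∀ ω, SXinvhalf (X ω)
        = (ContinuousLinearMap.adjoint (SZinvhalf.comp (Γ₀.comp SXhalf)))
            (SZinvhalf (Z ω)) :=
  stmt_11_general μ M P hP X Z hXM Γ₀ hZ SX SZ hSX hSZ SXhalf hSXhalf_sa hSXhalfP hSXhalf SXinvhalf
    hSXinvhalfP hSXhalfinv SZinvhalf hSZinvhalf_sa hSZinvhalfP hSZinvhalf
end

section
/- Let D be a diagonal matrix of operators on the direct sum Hilbert space H = H₁ × ⋯ × Hₚ (i.e., D_{ij} = 0 for i ≠ j and each D_{ii} self-adjoint) of finite rank d, with spectral decomposition D = Σ_{k=1}^d τ_k (ψ_k ⊗ ψ_k) where the eigenvalues τ_1,...,τ_d are distinct and nonzero. Then each eigenvector ψ_k is canonical, i.e., has at most one nonzero component. -/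
/-!
Each coordinate of `D ψ_k = τ_k ψ_k` reads `D_ii (ψ_k i) = τ_k ψ_k i`, so the vector that keeps only
the `i`-th coordinate of `ψ_k` is again a `τ_k`-eigenvector of `D`. As the `τ`'s are distinct and
`τ_k ≠ 0`, this eigenspace of `Σ τ_m (ψ_m ⊗ ψ_m)` is the line through `ψ_k`; hence `ψ_k` is a
nonzero multiple of a vector supported on the single coordinate `i`.
-/

open ContinuousLinearMap

instance piLp_completeSpace {p : ℕ} (H : Fin p → Type*)
    [∀ i, UniformSpace (H i)] [∀ i, CompleteSpace (H i)] :
    CompleteSpace (PiLp 2 H) := PiLp.completeSpace 2 H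

section SpectralSum

variable {𝕜 E ι : Type*} [RCLike 𝕜] [NormedAddCommGroup E] [InnerProductSpace 𝕜 E] [Fintype ι]

noncomputable def spectralSum (ψ : ι → E) (τ : ι → 𝕜) : E →L[𝕜] E :=
  ∑ m, τ m • (innerSL 𝕜 (ψ m)).smulRight (ψ m)

variable {ψ : ι → E} {τ : ι → 𝕜}

theorem spectralSum_apply (x : E) :
    spectralSum ψ τ x = ∑ m, (τ m * inner 𝕜 (ψ m) x) • ψ m := by
  simp only [spectralSum, sum_apply, smul_apply, smulRight_apply, innerSL_apply_apply, smul_smul]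

theorem Orthonormal.inner_spectralSum_apply (hψ : Orthonormal 𝕜 ψ) (n : ι) (x : E) :
    inner 𝕜 (ψ n) (spectralSum ψ τ x) = τ n * inner 𝕜 (ψ n) x := by
  rw [spectralSum_apply, hψ.inner_right_fintype]

theorem Orthonormal.spectralSum_apply_self (hψ : Orthonormal 𝕜 ψ) (k : ι) :
    spectralSum ψ τ (ψ k) = τ k • ψ k := by
  rw [spectralSum_apply, Finset.sum_eq_single k]
  · rw [inner_self_eq_norm_sq_to_K, hψ.1 k]; simp
  · intro m _ hm
    rw [hψ.2 hm, mul_zero, zero_smul]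
  · simp

theorem Orthonormal.eq_inner_smul_of_spectralSum_apply_eq_smul (hψ : Orthonormal 𝕜 ψ)
    (hτ : Function.Injective τ) {k : ι} (hk : τ k ≠ 0) {x : E}
    (hx : spectralSum ψ τ x = τ k • x) : x = inner 𝕜 (ψ k) x • ψ k := by
  have hcoef : ∀ m ≠ k, inner 𝕜 (ψ m) x = 0 := by
    intro m hm
    have h := hψ.inner_spectralSum_apply (τ := τ) m x
    rw [hx, inner_smul_right] at h
    by_contra hne
    exact hm (hτ (mul_right_cancel₀ hne h)).symm
  apply smul_right_injective E hk
  dsimp only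
  rw [← hx, spectralSum_apply, Finset.sum_eq_single k, smul_smul]
  · intro m _ hm
    rw [hcoef m hm, mul_zero, zero_smul]
  · simp

end SpectralSum

namespace PiLp

variable {p : ENNReal} {ι : Type*} [DecidableEq ι] {𝕜 : Type*} {H : ι → Type*}

theorem apply_single_eq_smul_of_apply_eq_smul [Semiring 𝕜] [∀ i, AddCommGroup (H i)]
    [∀ i, Module 𝕜 (H i)] {D : PiLp p H → PiLp p H} {Dk : ∀ i, H i →ₗ[𝕜] H i}
    (hD : ∀ f i, D f i = Dk i (f i)) {f : PiLp p H} {c : 𝕜} (hf : D f = c • f) (i : ι) :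
    D (single p i (f i)) = c • single p i (f i) := by
  ext l
  rw [hD, WithLp.ofLp_smul, Pi.smul_apply]
  rcases eq_or_ne l i with rfl | hl
  · rw [single_eq_same, ← hD, hf, WithLp.ofLp_smul, Pi.smul_apply]
  · rw [single_eq_of_ne p hl, map_zero, smul_zero]

theorem apply_eq_zero_of_single_eq_smul [DivisionRing 𝕜] [∀ i, AddCommGroup (H i)]
    [∀ i, Module 𝕜 (H i)] {y : PiLp p H} {c : 𝕜} {i j : ι}
    (h : single p i (y i) = c • y) (hi : y i ≠ 0) (hj : j ≠ i) : y j = 0 := by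
  have hc : c ≠ 0 := by
    rintro rfl
    have hyi := congrArg (fun z : PiLp p H => z i) h
    rw [single_eq_same, zero_smul] at hyi
    exact hi hyi
  have hyj := congrArg (fun z : PiLp p H => z j) h
  simp only [single_eq_of_ne p hj, WithLp.ofLp_smul, Pi.smul_apply] at hyj
  exact (smul_eq_zero_iff_right hc).mp hyj.symm

end PiLp

theorem stmt_16_general {p : ℕ} (H : Fin p → Type*)
    [∀ i, NormedAddCommGroup (H i)] [∀ i, InnerProductSpace ℝ (H i)]
    (Dk : ∀ i : Fin p, H i →L[ℝ] H i)
    (D : PiLp 2 H →L[ℝ] PiLp 2 H)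
    -- `D` is the diagonal matrix of operators with diagonal entries `Dk`
    (hD : ∀ f : PiLp 2 H, ∀ i : Fin p, D f i = Dk i (f i))
    {d : ℕ} (ψ : Fin d → PiLp 2 H) (τ : Fin d → ℝ)
    (hψ : Orthonormal ℝ ψ)
    (hτ : Function.Injective τ) (hτ0 : ∀ k, τ k ≠ 0)
    -- spectral decomposition `D = Σ_k τ_k (ψ_k ⊗ ψ_k)`
    (hspec : D = ∑ k : Fin d, τ k • ((innerSL ℝ (ψ k)).smulRight (ψ k))) :
    ∀ k : Fin d, ∀ i j : Fin p, ψ k i ≠ 0 → ψ k j ≠ 0 → i = j := by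
  intro k i j hi hj
  by_contra hij
  have hDspec : D = spectralSum ψ τ := hspec
  have hDψ : D (ψ k) = τ k • ψ k := hDspec ▸ hψ.spectralSum_apply_self k
  have hDsingle := PiLp.apply_single_eq_smul_of_apply_eq_smul hD hDψ i
  have hsingle := hψ.eq_inner_smul_of_spectralSum_apply_eq_smul hτ (hτ0 k) (hDspec ▸ hDsingle)
  exact hj (PiLp.apply_eq_zero_of_single_eq_smul hsingle hi (Ne.symm hij))

/-- If `D` is a diagonal matrix of operators on
`H = H₁ × ⋯ × Hₚ` (off-diagonal entries zero, diagonal entries self-adjoint)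
of finite rank `d`, with spectral decomposition `D = Σ_k τ_k (ψ_k ⊗ ψ_k)`
where the `τ_k` are distinct and nonzero, then each eigenvector `ψ_k` is
canonical: it has at most one nonzero component. -/
theorem stmt_16 {p : ℕ} (H : Fin p → Type*)
    [∀ i, NormedAddCommGroup (H i)] [∀ i, InnerProductSpace ℝ (H i)]
    [∀ i, CompleteSpace (H i)]
    (Dk : ∀ i : Fin p, H i →L[ℝ] H i)
    (hDk : ∀ i, IsSelfAdjoint (Dk i))
    (D : PiLp 2 H →L[ℝ] PiLp 2 H)
    -- `D` is the diagonal matrix of operators with diagonal entries `Dk`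
    (hD : ∀ f : PiLp 2 H, ∀ i : Fin p, D f i = Dk i (f i))
    {d : ℕ} (ψ : Fin d → PiLp 2 H) (τ : Fin d → ℝ)
    (hψ : Orthonormal ℝ ψ)
    (hτ : Function.Injective τ) (hτ0 : ∀ k, τ k ≠ 0)
    -- spectral decomposition `D = Σ_k τ_k (ψ_k ⊗ ψ_k)`
    (hspec : D = ∑ k : Fin d, τ k • ((innerSL ℝ (ψ k)).smulRight (ψ k))) :
    ∀ k : Fin d, ∀ i j : Fin p, ψ k i ≠ 0 → ψ k j ≠ 0 → i = j :=
  stmt_16_general H Dk D hD ψ τ hψ hτ hτ0 hspec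
end
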